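/- arXiv:1904.12377 — 2 statements merged into one kernel-verified Lean document; each statement's English description precedes it below -/
import Mathlib

section
/- Let G be an M-group, N a normal subgroup, θ an irreducible character of N, χ an irreducible constituent of θ^G, and H ≤ G with a linear character λ of H such that λ^G = χ. If N'' ∩ (tHt⁻¹) ⊆ tH't⁻¹ for all t ∈ G, then N'' is contained in the kernel of χ. -/
open scoped Classical

noncomputable section

/-- `χ : G → ℂ` is the character of some finite-dimensional complex representation of `G`. -/
def IsChar (G : Type) [Group G] (χ : G → ℂ) : Prop :=
  ∃ V : FDRep ℂ G, χ = V.character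

/-- `χ : G → ℂ` is the character of some irreducible (simple) complex representation of `G`. -/
def IsIrrChar (G : Type) [Group G] (χ : G → ℂ) : Prop :=
  ∃ V : FDRep ℂ G, CategoryTheory.Simple V ∧ χ = V.character

/-- The induced class function of `θ : H → ℂ` from a subgroup `H ≤ G` to `G`. -/
def indFn {G : Type} [Group G] [Fintype G] (H : Subgroup G) (θ : H → ℂ) : G → ℂ :=
  fun g => (Fintype.card H : ℂ)⁻¹ *
    ∑ x : G, if h : x⁻¹ * g * x ∈ H then θ ⟨x⁻¹ * g * x, h⟩ else 0

/-- A character of `G` is monomial if it is induced from a linear character of a subgroup. -/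
def IsMonomial (G : Type) [Group G] [Fintype G] (χ : G → ℂ) : Prop :=
  ∃ (H : Subgroup G) (θ : H → ℂ), IsChar H θ ∧ θ 1 = 1 ∧ indFn H θ = χ

/-- An irreducible character of `H` is primitive if it is not induced from a character
of any proper subgroup. -/
def IsPrimitiveChar (H : Type) [Group H] [Fintype H] (θ : H → ℂ) : Prop :=
  IsIrrChar H θ ∧ ∀ (K : Subgroup H) (ψ : K → ℂ), K ≠ ⊤ → IsChar K ψ → indFn K ψ ≠ θ

/-- An irreducible character of `G` is super-monomial if every primitive character of a
subgroup inducing it is linear. -/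
def IsSuperMonomial (G : Type) [Group G] [Fintype G] (χ : G → ℂ) : Prop :=
  IsIrrChar G χ ∧
    ∀ (H : Subgroup G) (θ : H → ℂ), IsPrimitiveChar H θ → indFn H θ = χ → θ 1 = 1

/-- The set of irreducible character degrees of `G`. -/
def charDegrees (G : Type) [Group G] [Fintype G] : Set ℕ :=
  {n | ∃ χ : G → ℂ, IsIrrChar G χ ∧ χ 1 = n}

/-- The set of monomial irreducible character degrees of `G`. -/
def monomialCharDegrees (G : Type) [Group G] [Fintype G] : Set ℕ :=
  {n | ∃ χ : G → ℂ, IsIrrChar G χ ∧ IsMonomial G χ ∧ χ 1 = n}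

/-- The standard inner product of class functions on `G`. -/
def charInner (G : Type) [Group G] [Fintype G] (φ ψ : G → ℂ) : ℂ :=
  (Fintype.card G : ℂ)⁻¹ * ∑ g : G, φ g * starRingEnd ℂ (ψ g)

/-!
For `n ∈ N''` every conjugate `x⁻¹ n x` lying in `H` lies in `H'`, where the linear character `λ`
is trivial, so the induction formula gives `χ n = |H|⁻¹ · #{x | x⁻¹ n x ∈ H}`; these values are
nonnegative and positive at `n = 1`, hence `∑_{n ∈ N''} χ n ≠ 0`. On a simple module `V` affording
`χ`, the operator `T = ∑_{n ∈ N''} ρ n` commutes with `G` because `N''` is normal, and its trace is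
that nonzero sum, so `T` is invertible by Schur's lemma. As `ρ n ∘ T = T` for `n ∈ N''`, `N''` acts
trivially on `V`.
-/

theorem LinearMap.trace_mul_of_finrank_eq_one {K M : Type*} [Field K] [AddCommGroup M]
    [Module K M] (h : Module.finrank K M = 1) (f g : Module.End K M) :
    LinearMap.trace K M (f * g) = LinearMap.trace K M f * LinearMap.trace K M g := by
  have := Module.finite_of_finrank_eq_succ h
  let b : Module.Basis (Fin 1) K M := Module.finBasisOfFinrankEq K M h
  simp only [LinearMap.trace_eq_matrix_trace K b, Module.End.mul_eq_comp,
    LinearMap.toMatrix_comp b b b, Matrix.trace_fin_one, Matrix.mul_apply, Finset.univ_unique,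
    Fin.default_eq_zero, Finset.sum_singleton]

namespace IsChar

variable {H : Type} [Group H] {lam : H → ℂ}

theorem map_mul_of_map_one (hlam : IsChar H lam) (hlin : lam 1 = 1) (a b : H) :
    lam (a * b) = lam a * lam b := by
  obtain ⟨V, rfl⟩ := hlam
  have hrank : Module.finrank ℂ V = 1 := by exact_mod_cast V.char_one.symm.trans hlin
  simp only [FDRep.character, map_mul]
  exact LinearMap.trace_mul_of_finrank_eq_one hrank _ _

@[simps]
def toMonoidHom (hlam : IsChar H lam) (hlin : lam 1 = 1) : H →* ℂ where
  toFun := lam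
  map_one' := hlin
  map_mul' := hlam.map_mul_of_map_one hlin

theorem map_eq_one_of_mem_commutator {G : Type} [Group G] {H : Subgroup G} {lam : H → ℂ}
    (hlam : IsChar H lam) (hlin : lam 1 = 1) {h : H} (hh : (h : G) ∈ ⁅H, H⁆) : lam h = 1 := by
  rw [← H.map_subtype_commutator] at hh
  obtain ⟨h', hh', hh⟩ := hh
  obtain rfl : h' = h := Subtype.ext hh
  have := Abelianization.commutator_subset_ker (hlam.toMonoidHom hlin).toHomUnits hh'
  simpa [MonoidHom.mem_ker, Units.ext_iff] using this

end IsChar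

section Induction

open Finset

variable {G : Type} [Group G] [Fintype G] {H : Subgroup G} {θ : H → ℂ}

theorem indFn_apply_of_forall_conj_map_eq_one {g : G}
    (h : ∀ x (hx : x⁻¹ * g * x ∈ H), θ ⟨_, hx⟩ = 1) :
    indFn H θ g = (Fintype.card H : ℂ)⁻¹ * #{x | x⁻¹ * g * x ∈ H} := by
  rw [indFn, natCast_card_filter]
  congr 1
  refine sum_congr rfl fun x _ ↦ ?_
  split_ifs with hx
  exacts [h x hx, rfl]

theorem sum_indFn_ne_zero_of_forall_conj_map_eq_one (K : Subgroup G)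
    (h : ∀ g ∈ K, ∀ x (hx : x⁻¹ * g * x ∈ H), θ ⟨_, hx⟩ = 1) :
    ∑ g : K, indFn H θ g ≠ 0 := by
  have hpos : 0 < ∑ g : K, #{x | x⁻¹ * (g : G) * x ∈ H} := by
    refine sum_pos' (fun _ _ ↦ Nat.zero_le _) ⟨1, mem_univ _, ?_⟩
    simp [H.one_mem, Fintype.card_pos]
  rw [sum_congr rfl fun (g : K) _ ↦ indFn_apply_of_forall_conj_map_eq_one (h g g.2),
    ← mul_sum]
  exact mul_ne_zero (by simp) (by exact_mod_cast hpos.ne')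

end Induction

namespace Representation

variable {k G V : Type*} [CommSemiring k] [Group G] [AddCommMonoid V] [Module k V]
  (ρ : Representation k G V) {K : Subgroup G} [Fintype K]

theorem mul_sum_subgroup_of_mem {g : G} (hg : g ∈ K) :
    ρ g * ∑ n : K, ρ n = ∑ n : K, ρ n := by
  simp_rw [Finset.mul_sum, ← map_mul]
  exact Fintype.sum_bijective (⟨g, hg⟩ * ·) (Group.mulLeft_bijective _) _ _ fun _ ↦ rfl

theorem commute_sum_subgroup [K.Normal] (g : G) : Commute (ρ g) (∑ n : K, ρ n) := by
  rw [Commute, SemiconjBy, Finset.mul_sum, Finset.sum_mul]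
  refine Fintype.sum_equiv (MulAut.conjNormal g).toEquiv _ _ fun n ↦ ?_
  simp only [MulEquiv.toEquiv_eq_coe, EquivLike.coe_coe, MulAut.conjNormal_apply, ← map_mul,
    inv_mul_cancel_right]

end Representation

namespace FDRep

variable {k G : Type} [Field k] [Group G] (V : FDRep k G) (K : Subgroup G) [K.Normal] [Fintype K]

def sumSubgroup : V ⟶ V :=
  ⟨FGModuleCat.ofHom (∑ n : K, V.ρ n), fun g ↦ by
    apply CategoryTheory.ObjectProperty.hom_ext
    apply ModuleCat.hom_ext
    exact (Representation.commute_sum_subgroup V.ρ g).symm⟩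

theorem ρ_eq_one_of_sum_character_ne_zero [CategoryTheory.Simple V]
    (hK : ∑ n : K, V.character n ≠ 0) {g : G} (hg : g ∈ K) : V.ρ g = 1 := by
  have hne : sumSubgroup V K ≠ 0 := by
    intro h
    apply hK
    have : LinearMap.trace k V (∑ n : K, V.ρ n) = 0 := by
      change LinearMap.trace k V (sumSubgroup V K).hom.hom.hom = 0
      rw [h]; exact map_zero _
    simpa [map_sum, FDRep.character] using this
  have := CategoryTheory.isIso_of_hom_simple hne
  have hsurj : Function.Surjective ⇑(∑ n : K, V.ρ n) :=
    (isoToLinearEquiv (CategoryTheory.asIso (sumSubgroup V K))).surjective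
  ext v
  obtain ⟨w, rfl⟩ := hsurj v
  exact LinearMap.congr_fun (Representation.mul_sum_subgroup_of_mem V.ρ hg) w

end FDRep

theorem stmt_3_general (G : Type) [Group G] [Fintype G]
    (N : Subgroup G) (hN : N.Normal)
    (χ : G → ℂ) (hχ : IsIrrChar G χ)
    (H : Subgroup G) (lam : H → ℂ) (hlam : IsChar H lam) (hlin : lam 1 = 1)
    (hind : indFn H lam = χ)
    (hsub : ∀ t g : G, g ∈ ⁅⁅N, N⁆, ⁅N, N⁆⁆ →
      g ∈ Subgroup.map (MulAut.conj t).toMonoidHom H →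
      g ∈ Subgroup.map (MulAut.conj t).toMonoidHom ⁅H, H⁆) :
    ∀ g ∈ ⁅⁅N, N⁆, ⁅N, N⁆⁆, χ g = χ 1 := by
  obtain ⟨V, hV, rfl⟩ := hχ
  have hconj : ∀ g ∈ ⁅⁅N, N⁆, ⁅N, N⁆⁆, ∀ x (hx : x⁻¹ * g * x ∈ H), lam ⟨_, hx⟩ = 1 := by
    intro g hg x hx
    have hmem := hsub x g hg (by rw [Subgroup.mem_map_equiv]; simpa [mul_assoc] using hx)
    rw [Subgroup.mem_map_equiv] at hmem
    exact hlam.map_eq_one_of_mem_commutator hlin (by simpa [mul_assoc] using hmem)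
  have hsum := sum_indFn_ne_zero_of_forall_conj_map_eq_one _ hconj
  rw [hind] at hsum
  intro g hg
  simp only [FDRep.character, V.ρ_eq_one_of_sum_character_ne_zero _ hsum hg, map_one]

/-- The Mackey computation in the proof of Theorem 1.2: if `N'' ∩ tHt⁻¹ ⊆ tH't⁻¹` for all
`t ∈ G`, then `N'' ⊆ Ker χ`. -/
theorem stmt_3 (G : Type) [Group G] [Fintype G]
    (hM : ∀ χ : G → ℂ, IsIrrChar G χ → IsMonomial G χ)
    (N : Subgroup G) (hN : N.Normal) (θ : N → ℂ) (hθ : IsIrrChar N θ)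
    (χ : G → ℂ) (hχ : IsIrrChar G χ)
    (hconst : charInner G (indFn N θ) χ ≠ 0)
    (H : Subgroup G) (lam : H → ℂ) (hlam : IsChar H lam) (hlin : lam 1 = 1)
    (hind : indFn H lam = χ)
    (hsub : ∀ t g : G, g ∈ ⁅⁅N, N⁆, ⁅N, N⁆⁆ →
      g ∈ Subgroup.map (MulAut.conj t).toMonoidHom H →
      g ∈ Subgroup.map (MulAut.conj t).toMonoidHom ⁅H, H⁆) :
    ∀ g ∈ ⁅⁅N, N⁆, ⁅N, N⁆⁆, χ g = χ 1 :=
  stmt_3_general G N hN χ hχ H lam hlam hlin hind hsub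
end
end

section
/- Let G be a finite group with a normal Sylow p-subgroup P such that P' ⊆ Ker(χ) for every irreducible character χ of G whose degree is not divisible by p, and suppose cd(G/P') = {1, n} where n = [G : I] for some subgroup I containing P. If G/P' = A × B with A abelian and B a q-group for some prime q, and G' is a p-group, then B is abelian (hence G/P' is abelian). -/
open scoped Classical

noncomputable section

/-!
Embed `B` in `Q = G/P'` as `1 × B`. If `q ≠ p`, then `B'` embeds in `Q'`, the image of the
`p`-group `G'`, so `B'` is both a `p`-group and a `q`-group, hence trivial. If `q = p`, the
preimage in `G` of the `p`-subgroup `1 × B` is a `p`-group (the kernel `P'` is one), so it lies in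
the normal Sylow subgroup `P`; thus `1 × B` lies in `P/P'`, which is abelian.
-/

section

open Subgroup

variable {G H : Type*} [Group G] [Group H] {p : ℕ}

lemma map_commutator_le (f : G →* H) : (commutator G).map f ≤ commutator H := by
  rw [commutator_def, commutator_def, map_commutator]
  exact commutator_mono le_top le_top

lemma map_commutator_of_surjective {f : G →* H} (hf : Function.Surjective f) :
    (commutator G).map f = commutator H := by
  rw [commutator_def, commutator_def, map_commutator, map_top_of_surjective f hf]

lemma IsPGroup.commutator_of_surjective (hG : IsPGroup p (commutator G)) {f : G →* H}
    (hf : Function.Surjective f) : IsPGroup p (commutator H) :=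
  map_commutator_of_surjective hf ▸ hG.map f

lemma IsPGroup.commutator_of_injective (hH : IsPGroup p (commutator H)) {f : G →* H}
    (hf : Function.Injective f) : IsPGroup p (commutator G) :=
  (hH.comap_of_injective f hf).to_le (map_le_iff_le_comap.mp (map_commutator_le f))

lemma commutator_eq_bot_of_isPGroup_of_ne {q : ℕ} [Fact p.Prime] [Fact q.Prime] (hpq : p ≠ q)
    (hG : IsPGroup q G) (hG' : IsPGroup p (commutator G)) : commutator G = ⊥ :=
  disjoint_self.mp (IsPGroup.disjoint_of_ne p q hpq _ _ hG' (hG.to_subgroup _))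

lemma commutator_eq_bot_of_range_le {f : G →* H} (hf : Function.Injective f) {M : Subgroup H}
    (hfM : f.range ≤ M) (hM : ⁅M, M⁆ = ⊥) : commutator G = ⊥ := by
  rw [← map_eq_bot_iff_of_injective _ hf, commutator_def, map_commutator, ← MonoidHom.range_eq_map,
    eq_bot_iff, ← hM]
  exact commutator_mono hfM hfM

lemma commutator_map_mk'_eq_bot {K N : Subgroup G} [N.Normal] (hKN : ⁅K, K⁆ ≤ N) :
    ⁅K.map (QuotientGroup.mk' N), K.map (QuotientGroup.mk' N)⁆ = ⊥ := by
  rwa [← map_commutator, Subgroup.map_eq_bot_iff, QuotientGroup.ker_mk']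

lemma IsPGroup.le_of_normal_sylow {K : Subgroup G} (hK : IsPGroup p K) (P : Sylow p G)
    [(P : Subgroup G).Normal] : K ≤ P :=
  le_sup_right.trans (P.is_maximal' (P.isPGroup'.to_sup_of_normal_left hK) le_sup_left).le

lemma IsPGroup.le_map_of_normal_sylow {K : Subgroup H} (hK : IsPGroup p K) {f : G →* H}
    (hf : Function.Surjective f) (hker : IsPGroup p f.ker) (P : Sylow p G)
    [(P : Subgroup G).Normal] : K ≤ (P : Subgroup G).map f :=
  map_comap_eq_self_of_surjective hf K ▸
    map_mono ((hK.comap_of_ker_isPGroup f hker).le_of_normal_sylow P)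

end

theorem stmt_18_general (G : Type) [Group G] (p q : ℕ) (hp : p.Prime) (hq : q.Prime)
    (P : Sylow p G) (hPn : (P : Subgroup G).Normal)
    [hP'n : (⁅P.toSubgroup, P.toSubgroup⁆ : Subgroup G).Normal]
    (A B : Type) [CommGroup A] [Group B] (hB : IsPGroup q B)
    (e : (G ⧸ (⁅P.toSubgroup, P.toSubgroup⁆ : Subgroup G)) ≃* A × B)
    (hG' : IsPGroup p (commutator G)) :
    ∀ x y : B, x * y = y * x := by
  set N : Subgroup G := ⁅P.toSubgroup, P.toSubgroup⁆
  let ι : B →* G ⧸ N := e.symm.toMonoidHom.comp (MonoidHom.inr A B)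
  have hι : Function.Injective ι := e.symm.injective.comp (Prod.mk_right_injective 1)
  rw [← isMulCommutative_iff, ← commutator_eq_bot_iff]
  by_cases hpq : p = q
  · subst hpq
    have hker_mk : IsPGroup p (QuotientGroup.mk' N).ker := by
      rw [QuotientGroup.ker_mk']
      exact P.isPGroup'.to_le (Subgroup.commutator_le_self _)
    have hιP : ι.range ≤ (P : Subgroup G).map (QuotientGroup.mk' N) :=
      (ι.range_eq_map ▸ (hB.to_subgroup ⊤).map ι).le_map_of_normal_sylow
        (QuotientGroup.mk'_surjective N) hker_mk P
    exact commutator_eq_bot_of_range_le hι hιP (commutator_map_mk'_eq_bot le_rfl)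
  · have := Fact.mk hp
    have := Fact.mk hq
    exact commutator_eq_bot_of_isPGroup_of_ne hpq hB
      ((hG'.commutator_of_surjective (QuotientGroup.mk'_surjective N)).commutator_of_injective hι)

/-- The case elimination in Lemma 3.2: with `P ⊴ G` a Sylow `p`-subgroup, `P' ⊆ Ker χ` for
every irreducible `χ` of degree prime to `p`, `cd(G/P') = {1, n}` with `n = [G : I]` and
`P ≤ I`, if `G/P' ≅ A × B` with `A` abelian and `B` a `q`-group, and `G'` is a `p`-group,
then `B` is abelian. -/
theorem stmt_18 (G : Type) [Group G] [Fintype G] (p q : ℕ) (hp : p.Prime) (hq : q.Prime)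
    (P : Sylow p G) (hPn : (P : Subgroup G).Normal)
    [hP'n : (⁅P.toSubgroup, P.toSubgroup⁆ : Subgroup G).Normal]
    [Fintype (G ⧸ (⁅P.toSubgroup, P.toSubgroup⁆ : Subgroup G))]
    (hker : ∀ χ : G → ℂ, IsIrrChar G χ → (∀ k : ℕ, χ 1 = k → ¬ p ∣ k) →
      ∀ g ∈ (⁅P.toSubgroup, P.toSubgroup⁆ : Subgroup G), χ g = χ 1)
    (n : ℕ) (I : Subgroup G) (hPI : P.toSubgroup ≤ I) (hn : n = I.index)
    (hcdq : charDegrees (G ⧸ (⁅P.toSubgroup, P.toSubgroup⁆ : Subgroup G)) = {1, n})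
    (A B : Type) [CommGroup A] [Group B] (hB : IsPGroup q B)
    (e : (G ⧸ (⁅P.toSubgroup, P.toSubgroup⁆ : Subgroup G)) ≃* A × B)
    (hG' : IsPGroup p (commutator G)) :
    ∀ x y : B, x * y = y * x :=
  stmt_18_general G p q hp hq P hPn (hP'n := hP'n) A B hB e hG'
end
end
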